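/- arXiv:2010.05285 — 4 statements merged into one kernel-verified Lean document; each statement's English description precedes it below -/
import Mathlib

section
/- Let G be a finite abelian group, let S be a symmetric subset of G with 0 ∉ S, and let k be a positive integer such that ks ≠ kt for all distinct s,t ∈ S, and such that 0 ∉ kS where kS = {ks : s ∈ S}. Then every automorphism of the Cayley graph Cay(G;S) is also an automorphism of the Cayley graph Cay(G;kS). -/
/-- The Cayley graph of an abelian group `G` with connection set `S`.
When `S` is symmetric and `0 ∉ S`, distinct `g, h` are adjacent iff `g - h ∈ S`. -/
def cayleyGraph {G : Type*} [AddCommGroup G] (S : Set G) : SimpleGraph G where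
  Adj g h := g ≠ h ∧ g - h ∈ S ∧ h - g ∈ S
  symm := ⟨by rintro g h ⟨hne, h1, h2⟩; exact ⟨hne.symm, h2, h1⟩⟩
  loopless := ⟨by rintro g ⟨hne, -, -⟩; exact hne rfl⟩

/-- The canonical bipartite double cover of a simple graph. -/
def doubleCover {V : Type*} (X : SimpleGraph V) : SimpleGraph (V × ZMod 2) where
  Adj a b := X.Adj a.1 b.1 ∧ a.2 ≠ b.2
  symm := ⟨by rintro a b ⟨h1, h2⟩; exact ⟨h1.symm, h2.symm⟩⟩
  loopless := ⟨by rintro a ⟨-, h2⟩; exact h2 rfl⟩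

/-- The direct (tensor/categorical) product of simple graphs. -/
def directProd {V W : Type*} (X : SimpleGraph V) (Y : SimpleGraph W) :
    SimpleGraph (V × W) where
  Adj a b := X.Adj a.1 b.1 ∧ Y.Adj a.2 b.2
  symm := ⟨by rintro a b ⟨h1, h2⟩; exact ⟨h1.symm, h2.symm⟩⟩
  loopless := ⟨by rintro a ⟨h1, -⟩; exact X.loopless.irrefl _ h1⟩

/-!
Over `ZMod p` the adjacency matrix of `Cay(G; S)` is the sum of the pairwise commuting
translation matrices `T s = circulant (Pi.single s 1)`, `s ∈ S`. Hence, by the Frobenius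
identity, its `p`-th power is `∑ s ∈ S, T (p • s)`, which is the adjacency matrix of
`Cay(G; pS)` as soon as `s ↦ p • s` is injective on `S`. An automorphism commutes with the
adjacency matrix, hence with its `p`-th power, and since `1 ≠ 0` in `ZMod p` it is an
automorphism of `Cay(G; pS)`. Factoring `k` into primes gives the general case.
-/

theorem sum_pow_char_of_commute {ι R : Type*} [Semiring R] (p : ℕ) [Fact p.Prime]
    [CharP R p] (s : Finset ι) (f : ι → R)
    (hf : ∀ i ∈ s, ∀ j ∈ s, Commute (f i) (f j)) :
    (∑ i ∈ s, f i) ^ p = ∑ i ∈ s, f i ^ p := by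
  classical
  induction s using Finset.induction_on with
  | empty => simp [zero_pow (Fact.out : p.Prime).ne_zero]
  | insert a s ha ih =>
    have hcomm : Commute (f a) (∑ i ∈ s, f i) :=
      Commute.sum_right _ _ _ fun i hi => hf a (by simp) i (by simp [hi])
    rw [Finset.sum_insert ha, Finset.sum_insert ha, add_pow_char_of_commute p hcomm,
      ih fun i hi j hj => hf i (by simp [hi]) j (by simp [hj])]

namespace Matrix

variable {G R : Type*} [AddCommGroup G] [DecidableEq G] [Semiring R]

theorem circulant_indicator_eq_sum (T : Finset G) :
    circulant ((T : Set G).indicator (1 : G → R)) = ∑ s ∈ T, circulant (Pi.single s 1) := by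
  ext i j
  simp [circulant_apply, Matrix.sum_apply, Pi.single_apply, Set.indicator_apply]

variable [Fintype G]

theorem circulant_single_one_mul (a b : G) :
    circulant (Pi.single a 1 : G → R) * circulant (Pi.single b 1) =
      circulant (Pi.single (a + b) 1) := by
  ext i j
  simp only [mul_apply, circulant_apply, Pi.single_apply, mul_ite, mul_one, mul_zero]
  simp_rw [sub_eq_iff_eq_add, Finset.sum_ite_eq', Finset.mem_univ, if_true, add_assoc]

theorem circulant_single_one_pow (a : G) (n : ℕ) :
    circulant (Pi.single a 1 : G → R) ^ n = circulant (Pi.single (n • a) 1) := by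
  induction n with
  | zero => simp
  | succ n ih => rw [pow_succ, ih, circulant_single_one_mul, succ_nsmul]

theorem circulant_indicator_pow_char {R : Type*} [CommSemiring R] (p : ℕ) [Fact p.Prime]
    [CharP R p] (T : Finset G) (hT : Set.InjOn (p • ·) (T : Set G)) :
    circulant ((T : Set G).indicator (1 : G → R)) ^ p =
      circulant ((T.image (p • ·) : Set G).indicator 1) := by
  rw [circulant_indicator_eq_sum, circulant_indicator_eq_sum,
    sum_pow_char_of_commute p T (fun s => circulant (Pi.single s (1 : R)))
      fun _ _ _ _ => circulant_mul_comm _ _,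
    Finset.sum_image hT]
  simp only [circulant_single_one_pow]

end Matrix

section

variable {G : Type*} [AddCommGroup G]

def PreservesDifferencesIn (φ : G ≃ G) (S : Set G) : Prop :=
  ∀ g h, φ g - φ h ∈ S ↔ g - h ∈ S

open Matrix in
theorem PreservesDifferencesIn.image_nsmul_of_prime [Fintype G] {φ : G ≃ G} {S : Set G}
    (hφ : PreservesDifferencesIn φ S) {p : ℕ} (hp : p.Prime) (hS : Set.InjOn (p • ·) S) :
    PreservesDifferencesIn φ ((p • ·) '' S) := by
  classical
  have := Fact.mk hp
  let M : Matrix G G (ZMod p) := circulant ((S.toFinset : Set G).indicator 1)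
  have hM : M.submatrix φ φ = M := by
    ext g h
    simp [M, circulant_apply, Set.indicator_apply, hφ g h]
  have hMp : (M ^ p).submatrix φ φ = M ^ p := by
    simpa [coe_reindexAlgEquiv, reindex_apply, hM] using
      map_pow (reindexAlgEquiv (ZMod p) (ZMod p) φ.symm) M p
  rw [circulant_indicator_pow_char p _ (by simpa using hS)] at hMp
  intro g h
  have := congrFun (congrFun hMp g) h
  simp only [circulant_apply, submatrix_apply, Finset.coe_image, Set.coe_toFinset] at this
  by_cases h₁ : φ g - φ h ∈ (p • ·) '' S <;> by_cases h₂ : g - h ∈ (p • ·) '' S <;>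
    simp [h₁, h₂] at this ⊢

theorem PreservesDifferencesIn.image_nsmul [Fintype G] {φ : G ≃ G} {S : Set G}
    (hφ : PreservesDifferencesIn φ S) (k : ℕ) (hS : Set.InjOn (k • ·) S) :
    PreservesDifferencesIn φ ((k • ·) '' S) := by
  induction k using Nat.recOnMul generalizing S with
  | zero =>
    intro g h
    simp [eq_sub_iff_add_eq]
  | one => simpa only [one_smul, Set.image_id'] using hφ
  | prime p hp => exact hφ.image_nsmul_of_prime hp hS
  | mul a b iha ihb =>
    have hb : Set.InjOn (b • ·) S := fun s hs t ht hst => hS hs ht (by simp only [mul_smul, hst])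
    have ha : Set.InjOn (a • ·) ((b • ·) '' S) := by
      rintro _ ⟨s, hs, rfl⟩ _ ⟨t, ht, rfl⟩ hst
      rw [hb.eq_iff hs ht]
      exact hS hs ht (by simpa only [mul_smul] using hst)
    simpa only [Set.image_image, mul_smul] using iha (ihb hφ hb) ha

theorem PreservesDifferencesIn.of_cayleyGraph {S : Set G} (hS : ∀ s ∈ S, -s ∈ S)
    (φ : cayleyGraph S ≃g cayleyGraph S) : PreservesDifferencesIn φ.toEquiv S := by
  have hadj : ∀ g h, (cayleyGraph S).Adj g h ↔ g ≠ h ∧ g - h ∈ S := fun g h =>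
    ⟨fun ⟨hne, hgh, _⟩ => ⟨hne, hgh⟩, fun ⟨hne, hgh⟩ => ⟨hne, hgh, by simpa using hS _ hgh⟩⟩
  intro g h
  obtain rfl | hne := eq_or_ne g h
  · simp
  · simpa [hadj, hne] using φ.map_adj_iff (v := g) (w := h)

end

theorem aut_cayley_smul_general {G : Type*} [AddCommGroup G] [Fintype G]
    (S : Set G) (hSsym : ∀ s ∈ S, -s ∈ S)
    (k : ℕ)
    (hinj : ∀ s ∈ S, ∀ t ∈ S, s ≠ t → k • s ≠ k • t)
    (φ : cayleyGraph S ≃g cayleyGraph S) :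
    ∀ g h : G,
      (cayleyGraph ((fun s => k • s) '' S)).Adj (φ g) (φ h) ↔
        (cayleyGraph ((fun s => k • s) '' S)).Adj g h := by
  have hφ := (PreservesDifferencesIn.of_cayleyGraph hSsym φ).image_nsmul k
    fun s hs t ht hst => by_contra fun hne => hinj s hs t ht hne hst
  intro g h
  exact and_congr φ.injective.ne_iff (and_congr (hφ g h) (hφ h g))

/-- If `G` is abelian and `k • s ≠ k • t` for distinct `s, t ∈ S`, then every
automorphism of `Cay(G; S)` is also an automorphism of `Cay(G; kS)`. -/
theorem aut_cayley_smul {G : Type*} [AddCommGroup G] [Fintype G]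
    (S : Set G) (hSsym : ∀ s ∈ S, -s ∈ S) (hS0 : (0 : G) ∉ S)
    (k : ℕ) (hk : 0 < k)
    (hinj : ∀ s ∈ S, ∀ t ∈ S, s ≠ t → k • s ≠ k • t)
    (h0 : (0 : G) ∉ (fun s => k • s) '' S)
    (φ : cayleyGraph S ≃g cayleyGraph S) :
    ∀ g h : G,
      (cayleyGraph ((fun s => k • s) '' S)).Adj (φ g) (φ h) ↔
        (cayleyGraph ((fun s => k • s) '' S)).Adj g h :=
  aut_cayley_smul_general S hSsym k hinj φ
end

section
/- Let G be a finite abelian group, let S be a symmetric subset of G with 0 ∉ S, and let p be a prime such that for every s ∈ S, the cardinality of the set {t ∈ S : pt = ps} is not divisible by p; assume also 0 ∉ pS, where pS = {ps : s ∈ S}. Then every automorphism of the Cayley graph Cay(G;S) is also an automorphism of the Cayley graph Cay(G;pS). -/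
/-! Put `a = ∑_{s ∈ S} [s]` in the group algebra `𝔽_p[G]`. The `(g, h)` entry of the `n`-th power
of the adjacency matrix of `Cay(G;S)` over `𝔽_p` is the coefficient of `a^n` at `h - g`, and graph
automorphisms preserve the entries of powers of the adjacency matrix. By the Frobenius map,
`a^p = ∑_{s ∈ S} [p s]`, whose coefficient at `d` is `#{t ∈ S | p t = d}` mod `p`; by the fibre
hypothesis it is nonzero exactly on `pS`. Hence adjacency in `Cay(G;pS)` is read off from the
`p`-th power of the adjacency matrix of `Cay(G;S)`, which every automorphism preserves. -/

open Finset

theorem SimpleGraph.Iso.adjMatrix_pow_apply {V W R : Type*} [Fintype V] [Fintype W]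
    [DecidableEq V] [DecidableEq W] [Semiring R]
    {X : SimpleGraph V} {Y : SimpleGraph W} [DecidableRel X.Adj] [DecidableRel Y.Adj]
    (f : X ≃g Y) (n : ℕ) (u v : V) :
    (Y.adjMatrix R ^ n) (f u) (f v) = (X.adjMatrix R ^ n) u v := by
  rw [← f.reindex_adjMatrix R, ← Matrix.coe_reindexAlgEquiv ℕ R, ← map_pow]
  simp

namespace AddMonoidAlgebra

variable {R G : Type*} [AddCommGroup G]

variable (R) in
noncomputable def ofFinset [Semiring R] (S : Finset G) : AddMonoidAlgebra R G :=
  ∑ s ∈ S, single s 1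

theorem coeff_ofFinset_mul [Semiring R] (S : Finset G) (x : AddMonoidAlgebra R G) (d : G) :
    (ofFinset R S * x).coeff d = ∑ s ∈ S, x.coeff (d - s) := by
  simp only [ofFinset, Finset.sum_mul, coeff_sum, Finsupp.finsetSum_apply]
  refine Finset.sum_congr rfl fun s _ => ?_
  rw [coeff_single_mul_apply, one_mul, sub_eq_neg_add]

theorem ofFinset_pow_char [CommRing R] (p : ℕ) [Fact p.Prime] [CharP R p] (S : Finset G) :
    ofFinset R S ^ p = ∑ s ∈ S, single (p • s) 1 := by
  have := charP_of_injective_algebraMap' R (A := AddMonoidAlgebra R G) p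
  simp only [ofFinset, sum_pow_char, single_pow, one_pow]

theorem coeff_ofFinset_pow_char [CommRing R] (p : ℕ) [Fact p.Prime] [CharP R p] [DecidableEq G]
    (S : Finset G) (d : G) :
    (ofFinset R S ^ p).coeff d = (#{t ∈ S | p • t = d} : R) := by
  rw [ofFinset_pow_char, coeff_sum, Finsupp.finsetSum_apply, Finset.card_filter, Nat.cast_sum]
  refine Finset.sum_congr rfl fun s _ => ?_
  rw [coeff_single, Finsupp.single_apply]
  split_ifs <;> simp

end AddMonoidAlgebra

open AddMonoidAlgebra

section CayleyGraph

variable {G : Type*} [AddCommGroup G]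

theorem cayleyGraph_adj_iff {S : Set G} (hSsym : ∀ s ∈ S, -s ∈ S) (hS0 : (0 : G) ∉ S)
    {g h : G} : (cayleyGraph S).Adj g h ↔ h - g ∈ S := by
  refine ⟨fun hadj => hadj.2.2, fun hgh => ⟨?_, ?_, hgh⟩⟩
  · rintro rfl
    exact hS0 (sub_self g ▸ hgh)
  · simpa using hSsym _ hgh

variable [Fintype G] [DecidableEq G] {S : Finset G}

theorem adjMatrix_cayleyGraph_pow_apply {R : Type*} [Semiring R] (hSsym : ∀ s ∈ S, -s ∈ S)
    (hS0 : (0 : G) ∉ S) [DecidableRel (cayleyGraph (S : Set G)).Adj] (n : ℕ) (g h : G) :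
    ((cayleyGraph (S : Set G)).adjMatrix R ^ n) g h = (ofFinset R S ^ n).coeff (h - g) := by
  induction n generalizing g with
  | zero =>
    rw [pow_zero, pow_zero, Matrix.one_apply, one_def, coeff_single, Finsupp.single_apply]
    exact if_congr (by rw [eq_sub_iff_add_eq, zero_add]) rfl rfl
  | succ n ih =>
    have hadj (s : G) : (cayleyGraph (S : Set G)).Adj g (g + s) ↔ s ∈ S := by
      rw [cayleyGraph_adj_iff (by exact_mod_cast hSsym) (by exact_mod_cast hS0),
        add_sub_cancel_left, Finset.mem_coe]
    rw [pow_succ', pow_succ', Matrix.mul_apply, coeff_ofFinset_mul,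
      ← Equiv.sum_comp (Equiv.addLeft g)]
    simp only [Equiv.coe_addLeft, SimpleGraph.adjMatrix_apply, hadj, ite_mul, one_mul, zero_mul,
      ih, sub_add_eq_sub_sub]
    rw [Finset.sum_ite_mem, Finset.univ_inter]

theorem cayleyGraph_smul_adj_iff_adjMatrix_pow_ne_zero {p : ℕ} (hp : p.Prime)
    (hSsym : ∀ s ∈ S, -s ∈ S) (hS0 : (0 : G) ∉ S)
    (hfib : ∀ s ∈ S, ¬ (p ∣ (S.filter (fun t => p • t = p • s)).card))
    (h0 : (0 : G) ∉ (fun s => p • s) '' (S : Set G))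
    [DecidableRel (cayleyGraph (S : Set G)).Adj] (g h : G) :
    (cayleyGraph ((fun s => p • s) '' (S : Set G))).Adj g h ↔
      ((cayleyGraph (S : Set G)).adjMatrix (ZMod p) ^ p) g h ≠ 0 := by
  have : Fact p.Prime := ⟨hp⟩
  have hpSsym : ∀ x ∈ (fun s => p • s) '' (S : Set G), -x ∈ (fun s => p • s) '' (S : Set G) := by
    rintro _ ⟨s, hs, rfl⟩
    exact ⟨-s, hSsym s hs, smul_neg p s⟩
  rw [cayleyGraph_adj_iff hpSsym h0, adjMatrix_cayleyGraph_pow_apply hSsym hS0,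
    coeff_ofFinset_pow_char, ne_eq, ZMod.natCast_eq_zero_iff]
  constructor
  · rintro ⟨s, hs, hsd⟩
    exact hsd ▸ hfib s hs
  · intro hndvd
    obtain ⟨t, ht⟩ := Finset.card_ne_zero.mp (fun h => hndvd (h ▸ dvd_zero p))
    rw [Finset.mem_filter] at ht
    exact ⟨t, ht.1, ht.2⟩

end CayleyGraph

/-- Weakened hypothesis version of the main lemma for a prime `p`: if each
fibre `{t ∈ S : p•t = p•s}` has cardinality not divisible by `p`, then every
automorphism of `Cay(G;S)` is also an automorphism of `Cay(G;pS)`. -/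
theorem aut_cayley_smul_prime {G : Type*} [AddCommGroup G] [Fintype G] [DecidableEq G]
    (S : Finset G) (hSsym : ∀ s ∈ S, -s ∈ S) (hS0 : (0 : G) ∉ S)
    (p : ℕ) (hp : p.Prime)
    (hfib : ∀ s ∈ S, ¬ (p ∣ (S.filter (fun t => p • t = p • s)).card))
    (h0 : (0 : G) ∉ (fun s => p • s) '' (S : Set G))
    (φ : cayleyGraph (S : Set G) ≃g cayleyGraph (S : Set G)) :
    ∀ g h : G,
      (cayleyGraph ((fun s => p • s) '' (S : Set G))).Adj (φ g) (φ h) ↔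
        (cayleyGraph ((fun s => p • s) '' (S : Set G))).Adj g h := by
  classical
  intro g h
  rw [cayleyGraph_smul_adj_iff_adjMatrix_pow_ne_zero hp hSsym hS0 hfib h0,
    cayleyGraph_smul_adj_iff_adjMatrix_pow_ne_zero hp hSsym hS0 hfib h0, φ.adjMatrix_pow_apply]
end

section
/- Let X be a twin-free simple graph, and let φ be an automorphism of the canonical bipartite double cover BX such that φ(v,0) = (v,0) for every vertex v of X. Then φ is the identity automorphism of BX. -/
theorem SimpleGraph.Iso.neighborSet_apply_eq_of_eqOn {V : Type*} {G : SimpleGraph V}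
    (φ : G ≃g G) {v : V} (h : Set.EqOn φ id (G.neighborSet v)) :
    G.neighborSet (φ v) = G.neighborSet v := by
  rw [← φ.image_neighborSet, h.image_eq_self]

section doubleCover

variable {V : Type*} {X : SimpleGraph V}

theorem doubleCover_neighborSet (v : V) (i : ZMod 2) :
    (doubleCover X).neighborSet (v, i) = X.neighborSet v ×ˢ {i + 1} := by
  ext ⟨w, j⟩
  have hj : i ≠ j ↔ j = i + 1 := by revert i j; decide
  simp only [SimpleGraph.mem_neighborSet, doubleCover, Set.mem_prod, Set.mem_singleton_iff, hj]

theorem eq_of_doubleCover_neighborSet_eq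
    (htf : ∀ v w : V, X.neighborSet v = X.neighborSet w → v = w) {v w : V} {i : ZMod 2}
    (h : (doubleCover X).neighborSet (v, i) = (doubleCover X).neighborSet (w, i)) : v = w := by
  rw [doubleCover_neighborSet, doubleCover_neighborSet] at h
  exact htf v w <| Set.ext fun u => by simpa using Set.ext_iff.mp h (u, i + 1)

theorem doubleCover_aut_snd_apply_one {φ : doubleCover X ≃g doubleCover X}
    (hφ : ∀ v : V, φ (v, 0) = (v, 0)) (v : V) : (φ (v, 1)).2 = 1 := by
  refine Fin.eq_one_of_ne_zero _ fun h0 => ?_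
  have hv : ((v, 1) : V × ZMod 2) = ((φ (v, 1)).1, 0) :=
    φ.injective <| by rw [hφ]; exact Prod.ext rfl h0
  exact one_ne_zero (congrArg Prod.snd hv)

end doubleCover

/-- If `X` is twin-free and an automorphism of the canonical double cover
fixes every vertex of the layer `V(X) × {0}`, then it is the identity. -/
theorem doubleCover_aut_fix_layer_eq_id {V : Type*} (X : SimpleGraph V)
    (htf : ∀ v w : V, X.neighborSet v = X.neighborSet w → v = w)
    (φ : doubleCover X ≃g doubleCover X)
    (hφ : ∀ v : V, φ (v, (0 : ZMod 2)) = (v, 0)) :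
    ∀ a : V × ZMod 2, φ a = a := by
  rintro ⟨v, i⟩
  obtain rfl | rfl : i = 0 ∨ i = 1 := by revert i; decide
  · exact hφ v
  · have hlayer : φ (v, 1) = ((φ (v, 1)).1, 1) :=
      Prod.ext rfl (doubleCover_aut_snd_apply_one hφ v)
    have hN := φ.neighborSet_apply_eq_of_eqOn (v := (v, 1)) <| by
      rintro ⟨u, j⟩ hu
      rw [doubleCover_neighborSet] at hu
      obtain rfl : j = 0 := hu.2
      exact hφ u
    rw [hlayer] at hN ⊢
    rw [eq_of_doubleCover_neighborSet_eq htf hN]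
end

section
/- Let X and Y be twin-free, connected, finite simple graphs, each with at least one edge, such that: (1) X is not bipartite; (2) Y is bipartite with bipartition V(Y) = Y₀ ∪ Y₁, where |Y₀| and |Y₁| are each relatively prime to |V(X)|, and either |Y₀| ≠ |Y₁| or Y has an automorphism interchanging Y₀ and Y₁; and (3) every automorphism of the canonical bipartite double cover BX lies in the image of the canonical embedding of Aut(X) × S₂ into Aut(BX). Then every automorphism of the direct product X × Y has the form (x,y) ↦ (α(x), β(y)) for some automorphism α of X and some automorphism β of Y; that is, Aut(X × Y) = Aut(X) × Aut(Y). -/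
/-!
Hammack and Imrich's Cartesian skeleton `S` turns direct products into Cartesian products:
for twin-free graphs without isolated vertices, `S(X × Y) = S(X) □ S(Y)`, and every
automorphism of a graph is one of its skeleton. Since `X` is connected and not bipartite,
`S(X)` is connected, while the components of `S(Y)` are the two parts `Y₀`, `Y₁`.

An automorphism `ψ` of `S(X) □ S(Y)` carries each layer `V × {y}` onto a connected set of
`|V|` vertices. Opposite sides of a square of `S(X) □ S(Y)` point in the same direction, so
this image is a product `A × B` with `B` inside one part `Yᵢ`; the sets `B` obtained this way
partition `Yᵢ` into blocks of a common size dividing both `|Yᵢ|` and `|V|`, hence `|B| = 1`.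
So `φ(x, y) = (g_y x, β y)` with `β ∈ Aut(Y)`. For an edge `y y'` of `Y`, `g_y` and `g_{y'}`
together form an automorphism of `BX`, which stability forces to be `α × id`; thus
`g_y = g_{y'} = α`, and connectivity of `Y` makes `g_y` independent of `y`.
-/

namespace Set
variable {α β : Type*} {s s' : Set α} {t t' : Set β}

lemma prod_ssubset_prod_iff (h : (s ×ˢ t).Nonempty) :
    s ×ˢ t ⊂ s' ×ˢ t' ↔ s ⊆ s' ∧ t ⊆ t' ∧ ¬ (s' ⊆ s ∧ t' ⊆ t) := by
  rw [ssubset_iff_subset_not_subset, prod_subset_prod_iff' h, and_assoc]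
  refine and_congr_right fun hs => and_congr_right fun ht => not_congr ?_
  exact prod_subset_prod_iff' (h.mono (prod_mono hs ht))

end Set

namespace SimpleGraph

variable {V V' : Type*} {G : SimpleGraph V} {G' : SimpleGraph V'}

lemma Reachable.apply_eq_of_forall_adj {α : Type*} {f : V → α}
    (hf : ∀ u v, G.Adj u v → f u = f v) {u v : V} (h : G.Reachable u v) : f u = f v := by
  obtain ⟨p⟩ := h
  induction p with
  | nil => rfl
  | cons huw _ ih => exact (hf _ _ huw).trans ih

lemma exists_adj_of_not_colorable (h : ¬ G.Colorable 2) : ∃ a b, G.Adj a b := by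
  by_contra! hG
  exact h ⟨Coloring.mk (fun _ => 0) fun hab => (hG _ _ hab).elim⟩

lemma Connected.nonempty_neighborSet (hG : G.Connected) {a b : V} (hab : G.Adj a b) (v : V) :
    (G.neighborSet v).Nonempty :=
  have := nontrivial_of_ne a b hab.ne
  hG.preconnected.exists_adj_of_nontrivial v

lemma exists_walk_even_length (hG : G.Connected) (h2 : ¬ G.Colorable 2) (u v : V) :
    ∃ p : G.Walk u v, Even p.length := by
  obtain ⟨w, c, hc⟩ : ∃ w, ∃ c : G.Walk w w, Odd c.length := by
    simpa [two_colorable_iff_forall_loop_even] using h2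
  obtain ⟨p⟩ := hG u v
  obtain ⟨q⟩ := hG v w
  rcases Nat.even_or_odd p.length with hp | hp
  · exact ⟨p, hp⟩
  · refine ⟨p.append (q.append (c.append q.reverse)), ?_⟩
    simp only [Walk.length_append, Walk.length_reverse]
    grind

lemma dvd_ncard_of_ncard_reachable_eq {α : Type*} [Finite α] {G : SimpleGraph α} {s : Set α}
    {m : ℕ} (hs : ∀ a ∈ s, ∀ b, G.Reachable a b → b ∈ s)
    (hm : ∀ a ∈ s, {b | G.Reachable a b}.ncard = m) : m ∣ s.ncard := by
  classical
  have := Fintype.ofFinite α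
  rw [Set.ncard_eq_toFinset_card', Finset.card_eq_sum_card_image G.connectedComponentMk]
  refine Finset.dvd_sum fun c hc => ?_
  obtain ⟨a, ha, rfl⟩ := Finset.mem_image.mp hc
  rw [Set.mem_toFinset] at ha
  have hfiber : {b ∈ s.toFinset | G.connectedComponentMk b = G.connectedComponentMk a} =
      {b | G.Reachable a b}.toFinset := by
    ext b
    simp only [Finset.mem_filter, Set.mem_toFinset, Set.mem_ofPred_eq, ConnectedComponent.eq]
    exact ⟨fun h => h.2.symm, fun h => ⟨hs a ha b h, h.symm⟩⟩
  rw [hfiber, ← Set.ncard_eq_toFinset_card', hm a ha]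

def boolSquare (G : SimpleGraph V) : SimpleGraph V where
  Adj a b := a ≠ b ∧ (G.neighborSet a ∩ G.neighborSet b).Nonempty
  symm := ⟨fun _ _ h => ⟨h.1.symm, Set.inter_comm (G.neighborSet _) _ ▸ h.2⟩⟩

lemma Walk.reachable_boolSquare {u v : V} (p : G.Walk u v) :
    (Even p.length → G.boolSquare.Reachable u v) ∧
      (Odd p.length → ∀ t, G.Adj t u → G.boolSquare.Reachable t v) := by
  induction p with
  | nil => exact ⟨fun _ => Reachable.refl _, fun h => absurd h (by simp)⟩
  | @cons u w v huw q ih =>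
    rw [length_cons, Nat.even_add_one, Nat.odd_add_one, Nat.not_even_iff_odd,
      Nat.not_odd_iff_even]
    refine ⟨fun h => ih.2 h u huw, fun h t htu => ?_⟩
    by_cases htw : t = w
    · exact htw ▸ ih.1 h
    · exact (show G.boolSquare.Adj t w from ⟨htw, u, htu, huw.symm⟩).reachable.trans (ih.1 h)

lemma Coloring.eq_of_boolSquare_adj (c : G.Coloring Bool) {u v : V}
    (h : G.boolSquare.Adj u v) : c u = c v := by
  obtain ⟨-, w, hu, hv⟩ := h
  have hu' := c.valid hu
  have hv' := c.valid hv
  revert hu' hv'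
  cases c u <;> cases c v <;> cases c w <;> decide

/-- `Z` is closer to `A` than `B` is: it shares strictly more with `A`, or it lies strictly
between `A` and `B`. -/
def IsCloser {α : Type*} (A B Z : Set α) : Prop := A ∩ B ⊂ A ∩ Z ∨ A ⊂ Z ∧ Z ⊂ B

section IsCloser
variable {α β : Type*}

lemma IsCloser.of_prod {A A' U : Set α} {B T : Set β} (hA : (A ∩ A').Nonempty)
    (hB : B.Nonempty) (hU : U.Nonempty) (hT : T.Nonempty)
    (h : IsCloser (A ×ˢ B) (A' ×ˢ B) (U ×ˢ T)) : IsCloser A A' U := by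
  rcases h with h | ⟨h₁, h₂⟩
  · rw [Set.prod_inter_prod, Set.prod_inter_prod, Set.inter_self,
      Set.prod_ssubset_prod_iff (hA.prod hB)] at h
    obtain ⟨hAU, -, hnot⟩ := h
    exact Or.inl (ssubset_iff_subset_not_subset.mpr
      ⟨hAU, fun h => hnot ⟨h, Set.inter_subset_left⟩⟩)
  · rw [Set.prod_ssubset_prod_iff ((hA.mono Set.inter_subset_left).prod hB)] at h₁
    rw [Set.prod_ssubset_prod_iff (hU.prod hT)] at h₂
    obtain ⟨hAU, hBT, hnot₁⟩ := h₁
    obtain ⟨hUA', hTB, hnot₂⟩ := h₂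
    -- `B ⊆ T ⊆ B`, so both strict inclusions live in the first factor
    exact Or.inr ⟨ssubset_iff_subset_not_subset.mpr ⟨hAU, fun h => hnot₁ ⟨h, hTB⟩⟩,
      ssubset_iff_subset_not_subset.mpr ⟨hUA', fun h => hnot₂ ⟨h, hBT⟩⟩⟩

lemma IsCloser.prod {A A' U : Set α} {B : Set β} (hA : (A ∩ A').Nonempty) (hB : B.Nonempty)
    (h : IsCloser A A' U) : IsCloser (A ×ˢ B) (A' ×ˢ B) (U ×ˢ B) := by
  have hprod {s s' : Set α} (hs : s.Nonempty) (hss' : s ⊂ s') : s ×ˢ B ⊂ s' ×ˢ B := by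
    rw [Set.prod_ssubset_prod_iff (hs.prod hB)]
    exact ⟨hss'.subset, subset_rfl, fun h => hss'.not_subset h.1⟩
  have hA₀ : A.Nonempty := hA.mono Set.inter_subset_left
  rcases h with h | ⟨h₁, h₂⟩
  · left
    rw [Set.prod_inter_prod, Set.prod_inter_prod, Set.inter_self]
    exact hprod hA h
  · exact Or.inr ⟨hprod hA₀ h₁, hprod (hA₀.mono h₁.subset) h₂⟩

lemma isCloser_prod_of_not_subset_left {A A' : Set α} {B B' : Set β} (hA : (A ∩ A').Nonempty)
    (hB : (B ∩ B').Nonempty) (h : ¬ A ⊆ A') :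
    IsCloser (A ×ˢ B) (A' ×ˢ B') (A ×ˢ B') := by
  left
  rw [Set.prod_inter_prod, Set.prod_inter_prod, Set.inter_self,
    Set.prod_ssubset_prod_iff (hA.prod hB)]
  exact ⟨Set.inter_subset_left, subset_rfl, fun h' => h (Set.subset_inter_iff.mp h'.1).2⟩

lemma isCloser_prod_of_not_subset_right {A A' : Set α} {B B' : Set β} (hA : (A ∩ A').Nonempty)
    (hB : (B ∩ B').Nonempty) (h : ¬ B ⊆ B') :
    IsCloser (A ×ˢ B) (A' ×ˢ B') (A' ×ˢ B) := by
  left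
  rw [Set.prod_inter_prod, Set.prod_inter_prod, Set.inter_self,
    Set.prod_ssubset_prod_iff (hA.prod hB)]
  exact ⟨subset_rfl, Set.inter_subset_left, fun h' => h (Set.subset_inter_iff.mp h'.2).2⟩

lemma isCloser_prod_of_ssubset {A A' : Set α} {B B' : Set β} (hA' : A'.Nonempty)
    (hB' : B'.Nonempty) (hA : A' ⊂ A) (hB : B' ⊂ B) :
    IsCloser (A ×ˢ B) (A' ×ˢ B') (A' ×ˢ B) ∧
      IsCloser (A' ×ˢ B') (A ×ˢ B) (A' ×ˢ B) := by
  have h₁ : A' ×ˢ B' ⊂ A' ×ˢ B := by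
    rw [Set.prod_ssubset_prod_iff (hA'.prod hB')]
    exact ⟨subset_rfl, hB.subset, fun h => hB.not_subset h.2⟩
  have h₂ : A' ×ˢ B ⊂ A ×ˢ B := by
    rw [Set.prod_ssubset_prod_iff (hA'.prod (hB'.mono hB.subset))]
    exact ⟨hA.subset, subset_rfl, fun h => hA.not_subset h.1⟩
  refine ⟨Or.inl ?_, Or.inr ⟨h₁, h₂⟩⟩
  rwa [Set.prod_inter_prod, Set.prod_inter_prod, Set.inter_self,
    Set.inter_eq_right.mpr hA.subset, Set.inter_eq_right.mpr hB.subset]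

end IsCloser

def Dispensable (G : SimpleGraph V) (a b : V) : Prop :=
  ∃ z, IsCloser (G.neighborSet a) (G.neighborSet b) (G.neighborSet z) ∧
    IsCloser (G.neighborSet b) (G.neighborSet a) (G.neighborSet z)

lemma Dispensable.symm {a b : V} (h : G.Dispensable a b) : G.Dispensable b a := by
  obtain ⟨z, h₁, h₂⟩ := h
  exact ⟨z, h₂, h₁⟩

def cartesianSkeleton (G : SimpleGraph V) : SimpleGraph V where
  Adj a b := G.boolSquare.Adj a b ∧ ¬ G.Dispensable a b
  symm := ⟨fun _ _ h => ⟨h.1.symm, fun hd => h.2 hd.symm⟩⟩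
  loopless := ⟨fun _ h => h.1.1 rfl⟩

lemma Iso.neighborSet_eq_preimage (φ : G ≃g G') (a : V) :
    G.neighborSet a = φ ⁻¹' G'.neighborSet (φ a) :=
  Set.ext fun _ => φ.map_adj_iff.symm

lemma Iso.boolSquare_adj_iff (φ : G ≃g G') {a b : V} :
    G'.boolSquare.Adj (φ a) (φ b) ↔ G.boolSquare.Adj a b := by
  simp only [boolSquare, φ.neighborSet_eq_preimage a, φ.neighborSet_eq_preimage b,
    ← Set.preimage_inter, φ.surjective.nonempty_preimage, ne_eq, φ.injective.eq_iff]

lemma Iso.dispensable_iff (φ : G ≃g G') {a b : V} :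
    G'.Dispensable (φ a) (φ b) ↔ G.Dispensable a b := by
  have hsub : ∀ s t : Set V', φ ⁻¹' s ⊆ φ ⁻¹' t ↔ s ⊆ t := fun _ _ =>
    φ.surjective.preimage_subset_preimage_iff
  have hssub : ∀ s t : Set V', φ ⁻¹' s ⊂ φ ⁻¹' t ↔ s ⊂ t := by
    simp only [ssubset_iff_subset_not_subset, hsub, implies_true]
  simp only [Dispensable, IsCloser, φ.neighborSet_eq_preimage, ← Set.preimage_inter, hssub,
    φ.surjective.exists]

def Iso.cartesianSkeleton (φ : G ≃g G') : G.cartesianSkeleton ≃g G'.cartesianSkeleton where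
  toEquiv := φ.toEquiv
  map_rel_iff' := and_congr φ.boolSquare_adj_iff (not_congr φ.dispensable_iff)

/-- A witness of dispensability strictly decreases this rank: first the common neighbourhood
grows, and if it does not, the union of the neighbourhoods shrinks. -/
def skeletonRank (G : SimpleGraph V) (a b : V) : Set V ×ₗ Set V :=
  toLex ((G.neighborSet a ∩ G.neighborSet b)ᶜ, G.neighborSet a ∪ G.neighborSet b)

lemma skeletonRank_comm (a b : V) : G.skeletonRank a b = G.skeletonRank b a := by
  rw [skeletonRank, skeletonRank, Set.inter_comm, Set.union_comm]

lemma skeletonRank_lt_of_isCloser (hG : ∀ v, (G.neighborSet v).Nonempty) {a b z : V}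
    (hab : (G.neighborSet a ∩ G.neighborSet b).Nonempty)
    (h : IsCloser (G.neighborSet a) (G.neighborSet b) (G.neighborSet z)) :
    z ≠ b ∧ (G.neighborSet a ∩ G.neighborSet z).Nonempty ∧
      G.skeletonRank a z < G.skeletonRank a b := by
  rcases h with h | ⟨haz, hzb⟩
  · refine ⟨?_, hab.mono h.subset, Prod.Lex.toLex_lt_toLex.mpr (Or.inl ?_)⟩
    · rintro rfl
      exact h.ne rfl
    · exact compl_lt_compl_iff_lt.mpr h
  · have hab' : G.neighborSet a ⊆ G.neighborSet b := haz.subset.trans hzb.subset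
    refine ⟨?_, ?_, Prod.Lex.toLex_lt_toLex.mpr (Or.inr ⟨?_, ?_⟩)⟩
    · rintro rfl
      exact hzb.ne rfl
    · rw [Set.inter_eq_left.mpr haz.subset]
      exact hG a
    · rw [Set.inter_eq_left.mpr haz.subset, Set.inter_eq_left.mpr hab']
    · rwa [Set.union_eq_right.mpr haz.subset, Set.union_eq_right.mpr hab']

theorem reachable_cartesianSkeleton_of_boolSquare_adj [Finite V]
    (hG : ∀ v, (G.neighborSet v).Nonempty) {a b : V} (hab : G.boolSquare.Adj a b) :
    G.cartesianSkeleton.Reachable a b := by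
  induction hr : G.skeletonRank a b using WellFoundedLT.induction generalizing a b with
  | _ r ih =>
    by_cases hd : G.Dispensable a b
    · obtain ⟨z, h₁, h₂⟩ := hd
      obtain ⟨hzb, haz, hlt₁⟩ := skeletonRank_lt_of_isCloser hG hab.2 h₁
      obtain ⟨hza, hbz, hlt₂⟩ :=
        skeletonRank_lt_of_isCloser hG (Set.inter_comm _ _ ▸ hab.2) h₂
      rw [skeletonRank_comm b a, skeletonRank_comm b z] at hlt₂
      exact (ih _ (hr ▸ hlt₁) ⟨hza.symm, haz⟩ rfl).trans
        (ih _ (hr ▸ hlt₂) ⟨hzb, Set.inter_comm _ _ ▸ hbz⟩ rfl)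
    · exact Adj.reachable ⟨hab, hd⟩

lemma cartesianSkeleton_le_boolSquare : G.cartesianSkeleton ≤ G.boolSquare := fun _ _ h => h.1

theorem reachable_cartesianSkeleton_iff [Finite V] (hG : ∀ v, (G.neighborSet v).Nonempty)
    {u v : V} : G.cartesianSkeleton.Reachable u v ↔ G.boolSquare.Reachable u v := by
  refine ⟨Reachable.mono cartesianSkeleton_le_boolSquare, fun h => ?_⟩
  rw [reachable_iff_reflTransGen] at h ⊢
  exact h.lift' id fun a b hab =>
    (reachable_iff_reflTransGen a b).mp (reachable_cartesianSkeleton_of_boolSquare_adj hG hab)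

lemma Connected.preconnected_cartesianSkeleton [Finite V] (hG : G.Connected)
    (h2 : ¬ G.Colorable 2) : G.cartesianSkeleton.Preconnected := fun u v => by
  obtain ⟨a, b, hab⟩ := exists_adj_of_not_colorable h2
  obtain ⟨p, hp⟩ := exists_walk_even_length hG h2 u v
  exact (reachable_cartesianSkeleton_iff (hG.nonempty_neighborSet hab)).mpr
    (p.reachable_boolSquare.1 hp)

lemma Coloring.reachable_cartesianSkeleton_iff [Finite V] (c : G.Coloring Bool)
    (hG : G.Connected) (hG' : ∀ v, (G.neighborSet v).Nonempty) {u v : V} :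
    G.cartesianSkeleton.Reachable u v ↔ c u = c v := by
  rw [SimpleGraph.reachable_cartesianSkeleton_iff hG']
  refine ⟨Reachable.apply_eq_of_forall_adj fun _ _ => c.eq_of_boolSquare_adj, fun h => ?_⟩
  obtain ⟨p⟩ := hG u v
  exact p.reachable_boolSquare.1 ((c.even_length_iff_congr p).mpr (Bool.eq_iff_iff.mp h))

lemma IsBipartiteWith.supp_connectedComponentMk_cartesianSkeleton [Finite V] {s t : Set V}
    (h : G.IsBipartiteWith s t) (hst : s ∪ t = Set.univ) (hG : G.Connected)
    (hG' : ∀ v, (G.neighborSet v).Nonempty) {v : V} (hv : v ∈ s) :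
    (G.cartesianSkeleton.connectedComponentMk v).supp = s := by
  have hs : ∀ {w}, w ∈ s ↔ w ∉ t := fun {w} =>
    ⟨fun hw => h.disjoint.notMem_of_mem_left hw, fun hw => (Set.mem_union _ _ _).mp
      (hst ▸ Set.mem_univ w) |>.resolve_right hw⟩
  classical
  let c : G.Coloring Bool := Coloring.mk (fun w => decide (w ∈ t)) fun huw => by
    rcases h.mem_of_adj huw with ⟨hu, hw⟩ | ⟨hu, hw⟩
    · simp [hs.mp hu, hw]
    · simp [hu, hs.mp hw]
  ext w
  rw [ConnectedComponent.mem_supp_iff, ConnectedComponent.eq,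
    c.reachable_cartesianSkeleton_iff hG hG']
  change decide (w ∈ t) = decide (v ∈ t) ↔ w ∈ s
  simp [hs.mp hv, hs]

section BoxProd
variable {W : Type*} {H : SimpleGraph W}

lemma boxProd_snd_eq_of_square {a b c d : V × W} (hab : (G □ H).Adj a b)
    (hbc : (G □ H).Adj b c) (hcd : (G □ H).Adj c d) (hda : (G □ H).Adj d a) (hac : a ≠ c)
    (hbd : b ≠ d) (h : a.2 = b.2) : c.2 = d.2 := by
  obtain ⟨a1, a2⟩ := a
  obtain ⟨b1, b2⟩ := b
  obtain ⟨c1, c2⟩ := c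
  obtain ⟨d1, d2⟩ := d
  simp only [boxProd_adj, ne_eq, Prod.mk.injEq] at *
  subst h
  grind [SimpleGraph.Adj.ne]

namespace Iso
variable (ψ : (G □ H) ≃g (G □ H))

/-- `G □ ⊥` is the disjoint union of the layers `V × {w}`; this is its image under `ψ`. -/
def layerGraph : SimpleGraph (V × W) := (G □ (⊥ : SimpleGraph W)).comap ψ.symm

variable {ψ}

lemma layerGraph_adj_iff {p q : V × W} :
    ψ.layerGraph.Adj p q ↔ (G □ H).Adj p q ∧ (ψ.symm p).2 = (ψ.symm q).2 := by
  rw [← ψ.symm.map_adj_iff]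
  simp only [layerGraph, comap_adj, boxProd_adj, bot_adj, false_and, or_false]
  grind [SimpleGraph.Adj.ne]

lemma layerGraph_le : ψ.layerGraph ≤ G □ H := fun _ _ h => (layerGraph_adj_iff.mp h).1

lemma layerGraph_adj_of_square {p q r s : V × W} (hpq : ψ.layerGraph.Adj p q)
    (hqr : (G □ H).Adj q r) (hrs : (G □ H).Adj r s) (hsp : (G □ H).Adj s p) (hpr : p ≠ r)
    (hqs : q ≠ s) : ψ.layerGraph.Adj r s := by
  rw [layerGraph_adj_iff] at hpq ⊢
  rw [← ψ.symm.map_adj_iff] at hpq hqr hrs hsp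
  exact ⟨ψ.symm.map_adj_iff.mp hrs, boxProd_snd_eq_of_square hpq.1 hqr hrs hsp
    (ψ.symm.injective.ne hpr) (ψ.symm.injective.ne hqs) hpq.2⟩

lemma layerGraph_adj_shift_right {x₁ x₂ : V} {y y' : W}
    (h : ψ.layerGraph.Adj (x₁, y) (x₂, y)) (hyy' : H.Adj y y') :
    ψ.layerGraph.Adj (x₁, y') (x₂, y') := by
  have hG : G.Adj x₁ x₂ := boxProd_adj_left.mp (layerGraph_le h)
  exact (layerGraph_adj_of_square h (boxProd_adj_right.mpr hyy') (boxProd_adj_left.mpr hG.symm)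
    (boxProd_adj_right.mpr hyy'.symm) (by simp [hyy'.ne]) (by simp [hyy'.ne])).symm

lemma layerGraph_adj_shift_left {x x' : V} {y₁ y₂ : W}
    (h : ψ.layerGraph.Adj (x, y₁) (x, y₂)) (hxx' : G.Adj x x') :
    ψ.layerGraph.Adj (x', y₁) (x', y₂) := by
  have hH : H.Adj y₁ y₂ := boxProd_adj_right.mp (layerGraph_le h)
  exact (layerGraph_adj_of_square h (boxProd_adj_left.mpr hxx') (boxProd_adj_right.mpr hH.symm)
    (boxProd_adj_left.mpr hxx'.symm) (by simp [hxx'.ne]) (by simp [hxx'.ne])).symm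

lemma comap_layerGraph_eq_of_reachable_right {y y' : W} (h : H.Reachable y y') :
    ψ.layerGraph.comap (·, y) = ψ.layerGraph.comap (·, y') :=
  h.apply_eq_of_forall_adj (f := fun y => ψ.layerGraph.comap (·, y)) fun _ _ hyy' => by
    ext
    exact ⟨(layerGraph_adj_shift_right · hyy'), (layerGraph_adj_shift_right · hyy'.symm)⟩

lemma comap_layerGraph_eq_of_reachable_left {x x' : V} (h : G.Reachable x x') :
    ψ.layerGraph.comap (x, ·) = ψ.layerGraph.comap (x', ·) :=
  h.apply_eq_of_forall_adj (f := fun x => ψ.layerGraph.comap (x, ·)) fun _ _ hxx' => by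
    ext
    exact ⟨(layerGraph_adj_shift_left · hxx'), (layerGraph_adj_shift_left · hxx'.symm)⟩

lemma reachable_layerGraph_iff (hG : G.Preconnected) {p q : V × W} :
    ψ.layerGraph.Reachable p q ↔ (ψ.symm p).2 = (ψ.symm q).2 := by
  rw [← (show ψ.layerGraph ≃g G □ (⊥ : SimpleGraph W) from
    Iso.comap ψ.symm.toEquiv _).reachable_iff]
  simp only [reachable_boxProd, hG _ _, reachable_bot, true_and]
  exact Iff.rfl

lemma reachable_layerGraph_iff_fst_snd (hG : G.Preconnected) {p q : V × W} :
    ψ.layerGraph.Reachable p q ↔ (ψ.layerGraph.comap (·, p.2)).Reachable p.1 q.1 ∧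
      (ψ.layerGraph.comap (p.1, ·)).Reachable p.2 q.2 := by
  constructor
  · intro h
    rw [reachable_iff_reflTransGen] at h
    induction h with
    | refl => exact ⟨Reachable.refl _, Reachable.refl _⟩
    | @tail r s hpr hrs ih =>
      obtain ⟨r₁, r₂⟩ := r
      obtain ⟨s₁, s₂⟩ := s
      have hHr : H.Reachable p.2 r₂ :=
        (reachable_boxProd.mp (((reachable_iff_reflTransGen _ _).mpr hpr).mono layerGraph_le)).2
      rcases boxProd_adj.mp (layerGraph_le hrs) with
        ⟨-, rfl : r₂ = s₂⟩ | ⟨-, rfl : r₁ = s₁⟩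
      · refine ⟨ih.1.trans (Adj.reachable ?_), ih.2⟩
        rwa [comap_layerGraph_eq_of_reachable_right hHr]
      · refine ⟨ih.1, ih.2.trans (Adj.reachable ?_)⟩
        rwa [comap_layerGraph_eq_of_reachable_left (hG p.1 r₁)]
  · rintro ⟨h₁, h₂⟩
    rw [comap_layerGraph_eq_of_reachable_left (hG p.1 q.1)] at h₂
    exact (h₁.map (Hom.comap _ _)).trans (h₂.map (Hom.comap _ _))

lemma ncard_mul_ncard_reachable_comap_layerGraph [Finite V] [Finite W] (hG : G.Preconnected)
    (p : V × W) :
    {x | (ψ.layerGraph.comap (·, p.2)).Reachable p.1 x}.ncard *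
      {y | (ψ.layerGraph.comap (p.1, ·)).Reachable p.2 y}.ncard = Nat.card V := by
  have hclass : {x | (ψ.layerGraph.comap (·, p.2)).Reachable p.1 x} ×ˢ
      {y | (ψ.layerGraph.comap (p.1, ·)).Reachable p.2 y} =
      ψ '' (Set.univ ×ˢ {(ψ.symm p).2}) := by
    ext q
    simp only [Set.mem_prod, Set.mem_ofPred_eq, ← reachable_layerGraph_iff_fst_snd hG,
      reachable_layerGraph_iff hG]
    refine ⟨fun h => ⟨ψ.symm q, ⟨trivial, h.symm⟩, ψ.apply_symm_apply q⟩, ?_⟩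
    rintro ⟨r, ⟨-, hr⟩, rfl⟩
    rw [RelIso.symm_apply_apply]
    exact (Set.mem_singleton_iff.mp hr).symm
  rw [← Set.ncard_prod, hclass, Set.ncard_image_of_injective _ ψ.injective, Set.ncard_prod,
    Set.ncard_univ, Set.ncard_singleton, mul_one]

theorem snd_apply_eq_of_coprime [Finite V] [Finite W] (hG : G.Preconnected)
    {C : H.ConnectedComponent} (hC : C.supp.ncard.Coprime (Nat.card V)) {x : V} {y : W}
    (hxy : (ψ (x, y)).2 ∈ C.supp) (x' : V) : (ψ (x', y)).2 = (ψ (x, y)).2 := by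
  set p := ψ (x, y)
  set F := ψ.layerGraph.comap (p.1, ·)
  set A := {x | (ψ.layerGraph.comap (·, p.2)).Reachable p.1 x}
  have hreach : ∀ w ∈ C.supp, H.Reachable p.2 w := fun w hw =>
    ConnectedComponent.exact (hxy.trans hw.symm)
  have hA : 0 < A.ncard := (Set.ncard_pos (Set.toFinite A)).mpr ⟨p.1, Reachable.refl _⟩
  have hF : ∀ w ∈ C.supp, A.ncard * {w' | F.Reachable w w'}.ncard = Nat.card V := fun w hw => by
    have := ψ.ncard_mul_ncard_reachable_comap_layerGraph hG (p.1, w)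
    rwa [← comap_layerGraph_eq_of_reachable_right (hreach w hw)] at this
  -- The image of the layer through `(p.1, w)` is `A × {w' | F.Reachable w w'}` for `w ∈ C`,
  -- so these blocks, which partition `C`, all have `|V| / |A|` elements.
  have hFH : F ≤ H := fun _ _ h => boxProd_adj_right.mp (layerGraph_le h)
  have hFC : ∀ w ∈ C.supp, ∀ w', F.Reachable w w' → w' ∈ C.supp := fun w hw w' h =>
    (ConnectedComponent.sound (h.mono hFH)).symm.trans hw
  have hdvd : {w | F.Reachable p.2 w}.ncard ∣ C.supp.ncard :=
    dvd_ncard_of_ncard_reachable_eq hFC fun w hw =>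
      Nat.eq_of_mul_eq_mul_left hA ((hF w hw).trans (hF p.2 hxy).symm)
  have hone : {w | F.Reachable p.2 w}.ncard = 1 :=
    (hC.coprime_dvd_left hdvd).eq_one_of_dvd ⟨A.ncard, by rw [← hF p.2 hxy, mul_comm]⟩
  have hpq : ψ.layerGraph.Reachable p (ψ (x', y)) := by
    simp [reachable_layerGraph_iff hG, p]
  exact ((Set.ncard_le_one (Set.toFinite _)).mp hone.le _
    ((reachable_layerGraph_iff_fst_snd hG).mp hpq).2 _ (Reachable.refl _))

end Iso

end BoxProd

end SimpleGraph

section DirectProd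
open SimpleGraph
variable {V W : Type*} {X : SimpleGraph V} {Y : SimpleGraph W}

lemma neighborSet_directProd (p : V × W) :
    (directProd X Y).neighborSet p = X.neighborSet p.1 ×ˢ Y.neighborSet p.2 := rfl

def directProdComm (X : SimpleGraph V) (Y : SimpleGraph W) : directProd X Y ≃g directProd Y X :=
  ⟨Equiv.prodComm V W, and_comm⟩

variable (hX : ∀ v, (X.neighborSet v).Nonempty) (hY : ∀ w, (Y.neighborSet w).Nonempty)
include hX hY

lemma dispensable_directProd_fst_iff {x x' : V} {y : W}
    (hxx' : (X.neighborSet x ∩ X.neighborSet x').Nonempty) :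
    (directProd X Y).Dispensable (x, y) (x', y) ↔ X.Dispensable x x' := by
  have hx'x := Set.inter_comm (X.neighborSet x) _ ▸ hxx'
  simp only [Dispensable, neighborSet_directProd, Prod.exists]
  constructor
  · rintro ⟨u, v, h₁, h₂⟩
    exact ⟨u, h₁.of_prod hxx' (hY y) (hX u) (hY v), h₂.of_prod hx'x (hY y) (hX u) (hY v)⟩
  · rintro ⟨u, h₁, h₂⟩
    exact ⟨u, y, h₁.prod hxx' (hY y), h₂.prod hx'x (hY y)⟩

lemma dispensable_directProd_snd_iff {x : V} {y y' : W}
    (hyy' : (Y.neighborSet y ∩ Y.neighborSet y').Nonempty) :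
    (directProd X Y).Dispensable (x, y) (x, y') ↔ Y.Dispensable y y' :=
  ((directProdComm X Y).dispensable_iff).symm.trans (dispensable_directProd_fst_iff hY hX hyy')

lemma dispensable_directProd_of_ne (hXtf : Function.Injective X.neighborSet)
    (hYtf : Function.Injective Y.neighborSet) {x x' : V} {y y' : W} (hx : x ≠ x') (hy : y ≠ y')
    (hxx' : (X.neighborSet x ∩ X.neighborSet x').Nonempty)
    (hyy' : (Y.neighborSet y ∩ Y.neighborSet y').Nonempty) :
    (directProd X Y).Dispensable (x, y) (x', y') := by
  have hx'x := Set.inter_comm (X.neighborSet x) _ ▸ hxx'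
  have hy'y := Set.inter_comm (Y.neighborSet y) _ ▸ hyy'
  have hNx := hXtf.ne hx
  have hNy := hYtf.ne hy
  simp only [Dispensable, neighborSet_directProd, Prod.exists]
  by_cases h₁ : X.neighborSet x ⊆ X.neighborSet x'
  · by_cases h₂ : Y.neighborSet y ⊆ Y.neighborSet y'
    · exact ⟨x, y', (isCloser_prod_of_ssubset (hX x) (hY y) (h₁.ssubset_of_ne hNx)
        (h₂.ssubset_of_ne hNy)).symm⟩
    · exact ⟨x', y, isCloser_prod_of_not_subset_right hxx' hyy' h₂,
        isCloser_prod_of_not_subset_left hx'x hy'y fun h => hNx (h₁.antisymm h)⟩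
  · by_cases h₂ : Y.neighborSet y' ⊆ Y.neighborSet y
    · by_cases h₃ : X.neighborSet x' ⊆ X.neighborSet x
      · exact ⟨x', y, isCloser_prod_of_ssubset (hX x') (hY y') (h₃.ssubset_of_ne hNx.symm)
          (h₂.ssubset_of_ne hNy.symm)⟩
      · exact ⟨x', y, isCloser_prod_of_not_subset_right hxx' hyy' fun h => hNy (h.antisymm h₂),
          isCloser_prod_of_not_subset_left hx'x hy'y h₃⟩
    · exact ⟨x, y', isCloser_prod_of_not_subset_left hxx' hyy' h₁,
        isCloser_prod_of_not_subset_right hx'x hy'y h₂⟩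

theorem cartesianSkeleton_directProd (hXtf : Function.Injective X.neighborSet)
    (hYtf : Function.Injective Y.neighborSet) :
    (directProd X Y).cartesianSkeleton = X.cartesianSkeleton □ Y.cartesianSkeleton := by
  ext ⟨x, y⟩ ⟨x', y'⟩
  simp only [cartesianSkeleton, boxProd_adj, boolSquare, neighborSet_directProd,
    Set.prod_inter_prod, Set.prod_nonempty_iff]
  rcases eq_or_ne x x' with rfl | hx <;> rcases eq_or_ne y y' with rfl | hy
  · simp
  · by_cases hyy' : (Y.neighborSet y ∩ Y.neighborSet y').Nonempty
    · simp [hy, hyy', hX x, dispensable_directProd_snd_iff hX hY hyy']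
    · simp [hyy']
  · by_cases hxx' : (X.neighborSet x ∩ X.neighborSet x').Nonempty
    · simp [hx, hxx', hY y, dispensable_directProd_fst_iff hX hY hxx']
    · simp [hxx']
  · simp only [hx, hy, ne_eq, Prod.mk.injEq, and_false, or_false, iff_false, not_and, not_not]
    exact fun ⟨_, hxx', hyy'⟩ => dispensable_directProd_of_ne hX hY hXtf hYtf hx hy hxx' hyy'

end DirectProd

section Automorphisms
open SimpleGraph
variable {V W : Type*} {X : SimpleGraph V} {Y : SimpleGraph W}

def IsStable (X : SimpleGraph V) : Prop :=
  ∀ Φ : doubleCover X ≃g doubleCover X, ∃ (α : X ≃g X) (σ : Equiv.Perm (ZMod 2)),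
    ∀ (v : V) (i : ZMod 2), Φ (v, i) = (α v, σ i)

theorem snd_apply_directProd_eq [Finite V] [Finite W] (hXtf : Function.Injective X.neighborSet)
    (hYtf : Function.Injective Y.neighborSet) (hX : X.Connected) (hX2 : ¬ X.Colorable 2)
    (hY : Y.Connected) {c d : W} (hcd : Y.Adj c d) {Y₀ Y₁ : Set W}
    (hYbip : Y.IsBipartiteWith Y₀ Y₁) (hcover : Y₀ ∪ Y₁ = Set.univ)
    (hcop₀ : Y₀.ncard.Coprime (Nat.card V)) (hcop₁ : Y₁.ncard.Coprime (Nat.card V))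
    (φ : directProd X Y ≃g directProd X Y) (x x' : V) (y : W) :
    (φ (x', y)).2 = (φ (x, y)).2 := by
  obtain ⟨a, b, hab⟩ := exists_adj_of_not_colorable hX2
  have hXn := hX.nonempty_neighborSet hab
  have hYn := hY.nonempty_neighborSet hcd
  have hS := cartesianSkeleton_directProd hXn hYn hXtf hYtf
  let ψ : (X.cartesianSkeleton □ Y.cartesianSkeleton) ≃g
      (X.cartesianSkeleton □ Y.cartesianSkeleton) :=
    ⟨φ.toEquiv, by rw [← hS]; exact φ.cartesianSkeleton.map_rel_iff'⟩
  set C := Y.cartesianSkeleton.connectedComponentMk (φ (x, y)).2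
  have hC : C.supp.ncard.Coprime (Nat.card V) := by
    rcases (Set.mem_union _ _ _).mp (hcover ▸ Set.mem_univ (φ (x, y)).2) with h | h
    · rwa [hYbip.supp_connectedComponentMk_cartesianSkeleton hcover hY hYn h]
    · rwa [hYbip.symm.supp_connectedComponentMk_cartesianSkeleton
        (Set.union_comm Y₀ Y₁ ▸ hcover) hY hYn h]
  exact ψ.snd_apply_eq_of_coprime (hX.preconnected_cartesianSkeleton hX2) hC
    (ConnectedComponent.connectedComponentMk_mem) x'

variable {φ : directProd X Y ≃g directProd X Y}
  (hφ : ∀ x x' y, (φ (x', y)).2 = (φ (x, y)).2) {a b : V} (hab : X.Adj a b)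
include hφ hab

lemma adj_snd_apply_of_adj {y y' : W} (h : Y.Adj y y') (x x' : V) :
    Y.Adj (φ (x, y)).2 (φ (x', y')).2 := by
  rw [hφ a x y, hφ b x' y']
  exact (φ.map_adj_iff.mpr ⟨hab, h⟩).2

lemma adj_fst_apply_iff {y y' : W} (h : Y.Adj y y') {v w : V} :
    X.Adj (φ (v, y)).1 (φ (w, y')).1 ↔ X.Adj v w :=
  ⟨fun hX => (φ.map_adj_iff.mp ⟨hX, adj_snd_apply_of_adj hφ hab h v w⟩).1,
    fun hX => (φ.map_adj_iff.mpr ⟨hX, h⟩).1⟩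

lemma exists_iso_snd_apply_eq (hφ' : ∀ x x' y, (φ.symm (x', y)).2 = (φ.symm (x, y)).2) :
    ∃ β : Y ≃g Y, ∀ x y, (φ (x, y)).2 = β y := by
  have hinv : ∀ y, (φ.symm (a, (φ (a, y)).2)).2 = y := fun y => by
    rw [hφ' (φ (a, y)).1 a, Prod.mk.eta, φ.symm_apply_apply]
  have hinv' : ∀ y, (φ (a, (φ.symm (a, y)).2)).2 = y := fun y => by
    rw [hφ (φ.symm (a, y)).1 a, Prod.mk.eta, φ.apply_symm_apply]
  let β : W ≃ W := ⟨fun y => (φ (a, y)).2, fun y => (φ.symm (a, y)).2, hinv, hinv'⟩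
  refine ⟨⟨β, fun {y y'} => ?_⟩, fun x y => hφ a x y⟩
  change Y.Adj (φ (a, y)).2 (φ (a, y')).2 ↔ Y.Adj y y'
  refine ⟨fun h => ?_, fun h => adj_snd_apply_of_adj hφ hab h a a⟩
  simpa only [hinv] using adj_snd_apply_of_adj hφ' hab h a a

lemma exists_iso_fst_apply_eq_of_adj [Finite V] (hstable : IsStable X) {y y' : W}
    (hyy' : Y.Adj y y') :
    ∃ α : X ≃g X, ∀ v, (φ (v, y)).1 = α v ∧ (φ (v, y')).1 = α v := by
  let f : ZMod 2 → W := fun i => if i = 0 then y else y'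
  have hf : ∀ i j, i ≠ j → Y.Adj (f i) (f j) := by
    intro i j hij
    have h10 : (1 : ZMod 2) ≠ 0 := by decide
    obtain ⟨rfl, rfl⟩ | ⟨rfl, rfl⟩ : i = 0 ∧ j = 1 ∨ i = 1 ∧ j = 0 := by
      revert i j; decide
    · simpa [f, h10] using hyy'
    · simpa [f, h10] using hyy'.symm
  -- `φ` on the two layers over `y` and `y'`, read as a map of the double cover
  let Φ : V × ZMod 2 → V × ZMod 2 := fun p => ((φ (p.1, f p.2)).1, p.2)
  have hΦ : Function.Injective Φ := by
    rintro ⟨v, i⟩ ⟨w, j⟩ h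
    obtain ⟨h₁, rfl : i = j⟩ := Prod.mk.inj h
    simpa using φ.injective (Prod.ext h₁ (hφ w v (f i)))
  have hΦadj : ∀ {p q}, (doubleCover X).Adj (Φ p) (Φ q) ↔ (doubleCover X).Adj p q := by
    rintro ⟨v, i⟩ ⟨w, j⟩
    exact and_congr_left fun hij => adj_fst_apply_iff hφ hab (hf i j hij)
  obtain ⟨α, σ, hασ⟩ :=
    hstable ⟨Equiv.ofBijective Φ ⟨hΦ, Finite.injective_iff_surjective.mp hΦ⟩, hΦadj⟩
  exact ⟨α, fun v => ⟨congrArg Prod.fst (hασ v 0), congrArg Prod.fst (hασ v 1)⟩⟩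

lemma exists_iso_fst_apply_eq [Finite V] (hstable : IsStable X) (hY : Y.Connected) {c d : W}
    (hcd : Y.Adj c d) :
    ∃ α : X ≃g X, ∀ x y, (φ (x, y)).1 = α x := by
  obtain ⟨α, hα⟩ := exists_iso_fst_apply_eq_of_adj hφ hab hstable hcd
  refine ⟨α, fun x y => ?_⟩
  have hlayer : (fun x => (φ (x, y)).1) = fun x => (φ (x, c)).1 :=
    (hY y c).apply_eq_of_forall_adj fun y y' hyy' => by
      obtain ⟨α', hα'⟩ := exists_iso_fst_apply_eq_of_adj hφ hab hstable hyy'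
      exact funext fun x => (hα' x).1.trans (hα' x).2.symm
  exact (congrFun hlayer x).trans (hα x).1

end Automorphisms

theorem aut_directProd_of_stable_general {V W : Type*} [Fintype V] [Fintype W]
    (X : SimpleGraph V) (Y : SimpleGraph W)
    (hXtf : ∀ v w : V, X.neighborSet v = X.neighborSet w → v = w)
    (hYtf : ∀ v w : W, Y.neighborSet v = Y.neighborSet w → v = w)
    (hXconn : X.Connected) (hYconn : Y.Connected)
    (hYe : Y.edgeSet.Nonempty)
    (hXnotbip : ¬ X.Colorable 2)
    (Y0 Y1 : Set W) (hYcover : Y0 ∪ Y1 = Set.univ) (hYdisj : Disjoint Y0 Y1)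
    (hYbip : ∀ v w : W, Y.Adj v w → (v ∈ Y0 ∧ w ∈ Y1) ∨ (v ∈ Y1 ∧ w ∈ Y0))
    (hcop0 : Nat.Coprime Y0.ncard (Fintype.card V))
    (hcop1 : Nat.Coprime Y1.ncard (Fintype.card V))
    (hstable : ∀ φ : doubleCover X ≃g doubleCover X,
      ∃ (α : X ≃g X) (σ : Equiv.Perm (ZMod 2)),
        ∀ (v : V) (i : ZMod 2), φ (v, i) = (α v, σ i)) :
    ∀ φ : directProd X Y ≃g directProd X Y,
      ∃ (α : X ≃g X) (β : Y ≃g Y),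
        ∀ (x : V) (y : W), φ (x, y) = (α x, β y) := by
  intro φ
  obtain ⟨a, b, hab⟩ := SimpleGraph.exists_adj_of_not_colorable hXnotbip
  obtain ⟨c, d, hcd⟩ :=
    SimpleGraph.ne_bot_iff_exists_adj.mp (SimpleGraph.edgeSet_nonempty.mp hYe)
  have hlayer := snd_apply_directProd_eq hXtf hYtf hXconn hXnotbip hYconn hcd
    ⟨hYdisj, hYbip⟩ hYcover (Nat.card_eq_fintype_card (α := V) ▸ hcop0)
    (Nat.card_eq_fintype_card (α := V) ▸ hcop1)
  obtain ⟨α, hα⟩ := exists_iso_fst_apply_eq (hlayer φ) hab hstable hYconn hcd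
  obtain ⟨β, hβ⟩ := exists_iso_snd_apply_eq (hlayer φ) hab (hlayer φ.symm)
  exact ⟨α, β, fun x y => Prod.ext (hα x y) (hβ x y)⟩

/-- If `X` is non-bipartite and stable, `Y` is bipartite with parts coprime
to `|V(X)|` (and the parts have different sizes or are interchanged by an
automorphism), and both graphs are twin-free, connected, with an edge, then
every automorphism of `X × Y` is a product of automorphisms of the factors. -/
theorem aut_directProd_of_stable {V W : Type*} [Fintype V] [Fintype W]
    (X : SimpleGraph V) (Y : SimpleGraph W)
    (hXtf : ∀ v w : V, X.neighborSet v = X.neighborSet w → v = w)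
    (hYtf : ∀ v w : W, Y.neighborSet v = Y.neighborSet w → v = w)
    (hXconn : X.Connected) (hYconn : Y.Connected)
    (hXe : X.edgeSet.Nonempty) (hYe : Y.edgeSet.Nonempty)
    (hXnotbip : ¬ X.Colorable 2)
    (Y0 Y1 : Set W) (hYcover : Y0 ∪ Y1 = Set.univ) (hYdisj : Disjoint Y0 Y1)
    (hYbip : ∀ v w : W, Y.Adj v w → (v ∈ Y0 ∧ w ∈ Y1) ∨ (v ∈ Y1 ∧ w ∈ Y0))
    (hcop0 : Nat.Coprime Y0.ncard (Fintype.card V))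
    (hcop1 : Nat.Coprime Y1.ncard (Fintype.card V))
    (hswap : Y0.ncard ≠ Y1.ncard ∨
      ∃ β : Y ≃g Y, (fun w => β w) '' Y0 = Y1 ∧ (fun w => β w) '' Y1 = Y0)
    (hstable : ∀ φ : doubleCover X ≃g doubleCover X,
      ∃ (α : X ≃g X) (σ : Equiv.Perm (ZMod 2)),
        ∀ (v : V) (i : ZMod 2), φ (v, i) = (α v, σ i)) :
    ∀ φ : directProd X Y ≃g directProd X Y,
      ∃ (α : X ≃g X) (β : Y ≃g Y),
        ∀ (x : V) (y : W), φ (x, y) = (α x, β y) :=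
  aut_directProd_of_stable_general X Y hXtf hYtf hXconn hYconn hYe hXnotbip Y0 Y1 hYcover hYdisj
    hYbip hcop0 hcop1 hstable
end
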